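/- Let κ be a Markov kernel on ℝ^m and c₁ > 0 a constant such that the log-Harnack inequality holds: for every bounded measurable f : ℝ^m → ℝ with f ≥ 1 and all x, x̄ ∈ ℝ^m, ∫ log f(y) κ(x,dy) ≤ log( ∫ f(y) κ(x̄,dy) ) + c₁ |x − x̄|². Then for every N ≥ 1 the N-fold product kernel κ^{⊗N} on (ℝ^m)^N satisfies the log-Harnack inequality with the same constant: for every bounded measurable F : (ℝ^m)^N → ℝ with F ≥ 1 and all 𝐱 = (x₁,…,x_N), 𝐱̄ = (x̄₁,…,x̄_N) ∈ (ℝ^m)^N, ∫ log F d(κ^{⊗N}(𝐱,·)) ≤ log( ∫ F d(κ^{⊗N}(𝐱̄,·)) ) + c₁ Σ_{i=1}^N |x_i − x̄_i|². -/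

import Mathlib

/-!
The log-Harnack inequality tensorizes over products of laws, with the constants adding up.
For `μ ⊗ ν` against `μ' ⊗ ν'`, the inequality for `(ν, ν')` applied to each slice `F(x, ·)`
bounds the inner integral by `log H(x) + b`, where `H(x) = ∫ F(x, ·) dν'` is again bounded,
measurable and `≥ 1`; the inequality for `(μ, μ')` applied to `H` finishes, by Fubini on both
sides. Induction over the coordinates gives the `N`-fold product kernel.
-/

open MeasureTheory ProbabilityTheory
open scoped ENNReal NNReal

/-- A bounded measurable real-valued function. -/
def BddMeasurableFn {E : Type*} [MeasurableSpace E] (f : E → ℝ) : Prop :=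
  Measurable f ∧ ∃ C : ℝ, ∀ x, |f x| ≤ C

namespace BddMeasurableFn

variable {α β : Type*} [MeasurableSpace α] [MeasurableSpace β]

lemma integrable {f : α → ℝ} (hf : BddMeasurableFn f) (μ : Measure α) [IsFiniteMeasure μ] :
    Integrable f μ :=
  let ⟨hm, C, hC⟩ := hf
  ⟨hm.aestronglyMeasurable, HasFiniteIntegral.of_bounded (C := C) (ae_of_all _ hC)⟩

lemma comp {f : β → ℝ} (hf : BddMeasurableFn f) {g : α → β} (hg : Measurable g) :
    BddMeasurableFn (fun x => f (g x)) :=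
  ⟨hf.1.comp hg, hf.2.imp fun _ hC x => hC (g x)⟩

lemma log {f : α → ℝ} (hf : BddMeasurableFn f) (hf1 : ∀ x, 1 ≤ f x) :
    BddMeasurableFn (fun x => Real.log (f x)) := by
  obtain ⟨hm, C, hC⟩ := hf
  refine ⟨hm.log, C, fun x => ?_⟩
  rw [abs_of_nonneg (Real.log_nonneg (hf1 x))]
  exact (Real.log_le_self (by linarith [hf1 x])).trans ((le_abs_self _).trans (hC x))

lemma integral_prod_right {f : α × β → ℝ} (hf : BddMeasurableFn f) (ν : Measure β)
    [IsProbabilityMeasure ν] : BddMeasurableFn (fun a => ∫ b, f (a, b) ∂ν) := by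
  obtain ⟨hm, C, hC⟩ := hf
  refine ⟨hm.stronglyMeasurable.integral_prod_right'.measurable, C, fun a => ?_⟩
  simpa using norm_integral_le_of_norm_le_const (μ := ν) (f := fun b => f (a, b))
    (ae_of_all _ fun b => hC (a, b))

lemma one_le_integral {f : α → ℝ} (hf : BddMeasurableFn f) (hf1 : ∀ x, 1 ≤ f x)
    (μ : Measure α) [IsProbabilityMeasure μ] : 1 ≤ ∫ x, f x ∂μ := by
  simpa using integral_mono (integrable_const 1) (hf.integrable μ) hf1

end BddMeasurableFn

/-- The log-Harnack inequality between two laws; for a kernel, `μ = κ x`, `μ' = κ x̄` and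
`c = c₁ ‖x - x̄‖²`. -/
def LogHarnack {α : Type*} [MeasurableSpace α] (μ μ' : Measure α) (c : ℝ) : Prop :=
  ∀ f : α → ℝ, BddMeasurableFn f → (∀ y, 1 ≤ f y) →
    ∫ y, Real.log (f y) ∂μ ≤ Real.log (∫ y, f y ∂μ') + c

namespace LogHarnack

variable {α β : Type*} [MeasurableSpace α] [MeasurableSpace β]

theorem of_measurePreserving {μ μ' : Measure α} {ν ν' : Measure β} {c : ℝ}
    (h : LogHarnack ν ν' c) (e : α ≃ᵐ β) (he : MeasurePreserving e μ ν)
    (he' : MeasurePreserving e μ' ν') : LogHarnack μ μ' c := by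
  intro F hF hF1
  have hlog := he.integral_comp e.measurableEmbedding fun y => Real.log (F (e.symm y))
  have hint := he'.integral_comp e.measurableEmbedding fun y => F (e.symm y)
  simp only [MeasurableEquiv.symm_apply_apply] at hlog hint
  rw [hlog, hint]
  exact h _ (hF.comp e.symm.measurable) fun y => hF1 _

theorem prod {μ μ' : Measure α} {ν ν' : Measure β} [IsProbabilityMeasure μ] [IsFiniteMeasure μ']
    [IsFiniteMeasure ν] [IsProbabilityMeasure ν'] {a b : ℝ}
    (hμ : LogHarnack μ μ' a) (hν : LogHarnack ν ν' b) :
    LogHarnack (μ.prod ν) (μ'.prod ν') (a + b) := by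
  intro F hF hF1
  set H : α → ℝ := fun x => ∫ y, F (x, y) ∂ν'
  have hH : BddMeasurableFn H := hF.integral_prod_right ν'
  have hH1 : ∀ x, 1 ≤ H x := fun x =>
    (hF.comp measurable_prodMk_left).one_le_integral (fun y => hF1 (x, y)) ν'
  have hslice : ∀ x, ∫ y, Real.log (F (x, y)) ∂ν ≤ Real.log (H x) + b := fun x =>
    hν _ (hF.comp measurable_prodMk_left) fun y => hF1 (x, y)
  have hlogF := (hF.log hF1).integrable (μ.prod ν)
  have hlogH := (hH.log hH1).integrable μ
  calc ∫ p, Real.log (F p) ∂(μ.prod ν)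
      = ∫ x, ∫ y, Real.log (F (x, y)) ∂ν ∂μ := integral_prod _ hlogF
    _ ≤ ∫ x, (Real.log (H x) + b) ∂μ :=
        integral_mono hlogF.integral_prod_left (hlogH.add (integrable_const b)) hslice
    _ = ∫ x, Real.log (H x) ∂μ + b := by
        rw [integral_add hlogH (integrable_const b), integral_const, probReal_univ, one_smul]
    _ ≤ Real.log (∫ x, H x ∂μ') + a + b := by linarith [hμ H hH hH1]
    _ = Real.log (∫ p, F p ∂(μ'.prod ν')) + (a + b) := by
        rw [integral_prod _ (hF.integrable _), add_assoc]

theorem pi {N : ℕ} {α : Fin N → Type*} [∀ i, MeasurableSpace (α i)]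
    {μ μ' : ∀ i, Measure (α i)} [∀ i, IsProbabilityMeasure (μ i)]
    [∀ i, IsProbabilityMeasure (μ' i)] {c : Fin N → ℝ} (h : ∀ i, LogHarnack (μ i) (μ' i) (c i)) :
    LogHarnack (Measure.pi μ) (Measure.pi μ') (∑ i, c i) := by
  induction N with
  | zero =>
    intro F _ _
    simp [integral_unique]
  | succ n ih =>
    have hsplit := (h 0).prod (ih fun j => h (Fin.succAbove 0 j))
    rw [Fin.sum_univ_succAbove c 0]
    exact hsplit.of_measurePreserving _ (measurePreserving_piFinSuccAbove μ 0)
      (measurePreserving_piFinSuccAbove μ' 0)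

end LogHarnack

theorem statement_4 (m : ℕ)
    (κ : Kernel (EuclideanSpace ℝ (Fin m)) (EuclideanSpace ℝ (Fin m))) [IsMarkovKernel κ]
    (c₁ : ℝ)
    (h : ∀ f : EuclideanSpace ℝ (Fin m) → ℝ, BddMeasurableFn f → (∀ y, 1 ≤ f y) →
      ∀ x xbar : EuclideanSpace ℝ (Fin m),
        ∫ y, Real.log (f y) ∂(κ x) ≤ Real.log (∫ y, f y ∂(κ xbar)) + c₁ * ‖x - xbar‖ ^ 2) :
    ∀ N : ℕ, 1 ≤ N → ∀ F : (Fin N → EuclideanSpace ℝ (Fin m)) → ℝ, BddMeasurableFn F →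
      (∀ y, 1 ≤ F y) → ∀ x xbar : Fin N → EuclideanSpace ℝ (Fin m),
        ∫ y, Real.log (F y) ∂(Measure.pi fun i => κ (x i))
          ≤ Real.log (∫ y, F y ∂(Measure.pi fun i => κ (xbar i)))
            + c₁ * ∑ i, ‖x i - xbar i‖ ^ 2 := by
  intro N _ F hF hF1 x xbar
  rw [Finset.mul_sum]
  exact LogHarnack.pi (fun i f hf hf1 => h f hf hf1 (x i) (xbar i)) F hF hF1
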